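/- Let H be a connected graph with Perron eigenvector x of its adjacency matrix, and let u, v be two non-adjacent vertices of H with N_H(u) ≠ N_H(v). If Σ_{w ∈ N_H(v)} x_w ≥ Σ_{w ∈ N_H(u)} x_w, then ρ(Z_{u,v}(H)) > ρ(H), where Z_{u,v}(H) is the Zykov symmetrization of H obtained by deleting all edges incident to u and adding all edges from u to the vertices of N_H(v). -/

import Mathlib

open SimpleGraph Matrix

/-- The adjacency matrix of a simple graph, over `ℝ`. -/
noncomputable def adjMat {V : Type*} (G : SimpleGraph V) : Matrix V V ℝ :=
  fun a b => by classical exact if G.Adj a b then 1 else 0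

/-- The spectral radius of a graph: the largest (real) eigenvalue of its adjacency
matrix, expressed as the supremum of the real spectrum. -/
noncomputable def specRad {V : Type*} [Fintype V] [DecidableEq V] (G : SimpleGraph V) : ℝ :=
  sSup (spectrum ℝ (adjMat G))

/-- A linear forest: an acyclic graph in which every vertex has degree at most 2,
i.e. every connected component is a path. -/
def IsLinearForest {V : Type*} (H : SimpleGraph V) : Prop :=
  H.IsAcyclic ∧ ∀ v, {w | H.Adj v w}.ncard ≤ 2

/-- `G` contains some member of `𝓛 s`, the family of linear forests with `s` edges. -/
def ContainsLinForest {V : Type*} (G : SimpleGraph V) (s : ℕ) : Prop :=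
  ∃ H : SimpleGraph V, H ≤ G ∧ IsLinearForest H ∧ H.edgeSet.ncard = s

/-- `G` belongs to `Ex_sp(n, {K_{k+1}, 𝓛_s})`: it is `{K_{k+1}, 𝓛_s}`-free and has the
maximum spectral radius among all such graphs on `n` vertices. -/
def IsExtremal (n k s : ℕ) (G : SimpleGraph (Fin n)) : Prop :=
  G.CliqueFree (k + 1) ∧ ¬ ContainsLinForest G s ∧
    ∀ H : SimpleGraph (Fin n), H.CliqueFree (k + 1) → ¬ ContainsLinForest H s →
      specRad H ≤ specRad G

/-- The degree of `v` in `G`. -/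
noncomputable def degOf {V : Type*} (G : SimpleGraph V) (v : V) : ℕ :=
  {w | G.Adj v w}.ncard

/-- The Zykov symmetrization `Z_{u,v}(H)`: delete all edges incident to `u` and join `u`
to every vertex of `N_H(v)`. -/
def zykov {V : Type*} (H : SimpleGraph V) (u v : V) : SimpleGraph V where
  Adj a b := (a ≠ u ∧ b ≠ u ∧ H.Adj a b) ∨ (a = u ∧ b ≠ u ∧ H.Adj v b) ∨
    (b = u ∧ a ≠ u ∧ H.Adj v a)
  symm := by
    refine ⟨?_⟩
    rintro a b (⟨h1, h2, h3⟩ | ⟨h1, h2, h3⟩ | ⟨h1, h2, h3⟩)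
    · exact Or.inl ⟨h2, h1, h3.symm⟩
    · exact Or.inr (Or.inr ⟨h1, h2, h3⟩)
    · exact Or.inr (Or.inl ⟨h1, h2, h3⟩)
  loopless := by
    refine ⟨?_⟩
    rintro a (⟨h1, h2, h3⟩ | ⟨h1, h2, h3⟩ | ⟨h1, h2, h3⟩)
    · exact H.irrefl h3
    · exact h2 h1
    · exact h2 h1

/-!
Write `A`, `Z` for the adjacency matrices of `H` and of its Zykov symmetrization, and
`d = A_v - A_u` for the difference of the rows of `v` and `u`. Since `u ≁ v`, `Z` is the
rank-two perturbation `A + e_u dᵀ + d e_uᵀ`, so `xᵀZx = ρ(H) xᵀx + 2 x_u (d ⬝ x)`, and the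
hypothesis says `d ⬝ x ≥ 0`. As `ρ(Z) I - Z` is positive semidefinite, `xᵀZx ≤ ρ(Z) xᵀx`,
hence `ρ(Z) ≥ ρ(H)`. If equality held, `x` would lie in the kernel of `ρ(Z) I - Z` (a PSD
quadratic form vanishes only on the kernel) and so be an eigenvector of `Z` for `ρ(H)`;
comparing `Zx = Ax + (d ⬝ x) e_u + x_u d` with `Ax` forces `x_u d = 0`, i.e. `N(u) = N(v)`.
-/

namespace Matrix

theorem dotProduct_algebraMap_sub_mulVec {n R : Type*} [Fintype n] [DecidableEq n] [CommRing R]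
    (c : R) (B : Matrix n n R) (x : n → R) :
    x ⬝ᵥ (algebraMap R (Matrix n n R) c - B) *ᵥ x = c * (x ⬝ᵥ x) - x ⬝ᵥ B *ᵥ x := by
  rw [sub_mulVec, Algebra.algebraMap_eq_smul_one, smul_mulVec, one_mulVec, dotProduct_sub,
    dotProduct_smul, smul_eq_mul]

namespace IsHermitian

variable {n : Type*} [Fintype n] [DecidableEq n] {B : Matrix n n ℝ}

theorem posSemidef_algebraMap_sSup_spectrum_sub (hB : B.IsHermitian) :
    (algebraMap ℝ (Matrix n n ℝ) (sSup (spectrum ℝ B)) - B).PosSemidef := by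
  refine posSemidef_iff_isHermitian_and_spectrum_nonneg.2
    ⟨(isHermitian_diagonal _).sub hB, ?_⟩
  rw [← spectrum.singleton_sub_eq]
  rintro _ ⟨_, rfl, μ, hμ, rfl⟩
  exact sub_nonneg.2 (le_csSup finite_real_spectrum.bddAbove hμ)

theorem dotProduct_mulVec_le_sSup_spectrum_mul (hB : B.IsHermitian) (x : n → ℝ) :
    x ⬝ᵥ B *ᵥ x ≤ sSup (spectrum ℝ B) * (x ⬝ᵥ x) := by
  have := hB.posSemidef_algebraMap_sSup_spectrum_sub.dotProduct_mulVec_nonneg x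
  rw [star_trivial, dotProduct_algebraMap_sub_mulVec] at this
  linarith

theorem mulVec_eq_sSup_spectrum_smul_of_le (hB : B.IsHermitian) {x : n → ℝ}
    (hx : sSup (spectrum ℝ B) * (x ⬝ᵥ x) ≤ x ⬝ᵥ B *ᵥ x) :
    B *ᵥ x = sSup (spectrum ℝ B) • x := by
  have hM := hB.posSemidef_algebraMap_sSup_spectrum_sub
  have hzero := (hM.dotProduct_mulVec_nonneg x).antisymm' <| by
    rw [star_trivial, dotProduct_algebraMap_sub_mulVec]
    linarith
  rw [hM.dotProduct_mulVec_zero_iff, sub_mulVec, sub_eq_zero, Algebra.algebraMap_eq_smul_one,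
    smul_mulVec, one_mulVec] at hzero
  exact hzero.symm

end IsHermitian

end Matrix

section Zykov

variable {V : Type*} (H : SimpleGraph V)

theorem adjMat_apply (a b : V) [Decidable (H.Adj a b)] :
    adjMat H a b = if H.Adj a b then 1 else 0 := by
  unfold adjMat
  congr

theorem adjMat_isHermitian : (adjMat H).IsHermitian := by
  classical
  ext a b
  simp only [conjTranspose_apply, star_trivial, adjMat_apply, H.adj_comm]

theorem neighborSet_eq_of_adjMat_row_eq {u v : V} (h : adjMat H u = adjMat H v) :
    H.neighborSet u = H.neighborSet v := by
  classical
  ext w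
  have := congrFun h w
  simp only [adjMat_apply] at this
  split_ifs at this <;> simp_all

variable [DecidableEq V]

theorem adjMat_zykov {u v : V} (huv : ¬ H.Adj u v) :
    adjMat (zykov H u v) = adjMat H + vecMulVec (Pi.single u 1) (adjMat H v - adjMat H u)
      + vecMulVec (adjMat H v - adjMat H u) (Pi.single u 1) := by
  classical
  ext a b
  have hvu : ¬ H.Adj v u := fun h ↦ huv h.symm
  simp only [Matrix.add_apply, vecMulVec_apply, Pi.sub_apply, Pi.single_apply, adjMat_apply]
  by_cases ha : a = u <;> by_cases hb : b = u <;>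
    simp [zykov, ha, hb, hvu, H.adj_comm a u]

variable [Fintype V]

theorem mulVec_adjMat_zykov {u v : V} (huv : ¬ H.Adj u v) (x : V → ℝ) :
    adjMat (zykov H u v) *ᵥ x = adjMat H *ᵥ x
      + ((adjMat H *ᵥ x) v - (adjMat H *ᵥ x) u) • Pi.single u 1
      + x u • (adjMat H v - adjMat H u) := by
  rw [adjMat_zykov H huv, add_mulVec, add_mulVec, vecMulVec_mulVec, vecMulVec_mulVec,
    sub_dotProduct, single_dotProduct, op_smul_eq_smul, op_smul_eq_smul, one_mul]
  rfl

theorem dotProduct_mulVec_adjMat_zykov {u v : V} (huv : ¬ H.Adj u v) (x : V → ℝ) :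
    x ⬝ᵥ adjMat (zykov H u v) *ᵥ x
      = x ⬝ᵥ adjMat H *ᵥ x + 2 * x u * ((adjMat H *ᵥ x) v - (adjMat H *ᵥ x) u) := by
  rw [mulVec_adjMat_zykov H huv, dotProduct_add, dotProduct_add, dotProduct_smul,
    dotProduct_smul, dotProduct_single, dotProduct_comm x (_ - _), sub_dotProduct]
  simp only [smul_eq_mul, mul_one]
  change _ + _ * ((adjMat H *ᵥ x) v - (adjMat H *ᵥ x) u) = _
  ring

end Zykov

theorem zykov_increases_spectral_radius_general {V : Type*} [Fintype V] [DecidableEq V]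
    (H : SimpleGraph V)
    (x : V → ℝ) (hxpos : ∀ w, 0 < x w) (heig : adjMat H *ᵥ x = specRad H • x)
    (u v : V) (hnadj : ¬ H.Adj u v)
    (hN : H.neighborSet u ≠ H.neighborSet v)
    (hsum : (adjMat H *ᵥ x) u ≤ (adjMat H *ᵥ x) v) :
    specRad H < specRad (zykov H u v) := by
  set Z := zykov H u v
  have hxu := hxpos u
  have hxx : 0 < x ⬝ᵥ x := Finset.sum_pos (fun w _ ↦ mul_self_pos.2 (hxpos w).ne') ⟨u, by simp⟩
  have hquad : x ⬝ᵥ adjMat Z *ᵥ x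
      = specRad H * (x ⬝ᵥ x) + 2 * x u * ((adjMat H *ᵥ x) v - (adjMat H *ᵥ x) u) := by
    rw [dotProduct_mulVec_adjMat_zykov H hnadj, heig, dotProduct_smul, smul_eq_mul]
  have hZ := adjMat_isHermitian Z
  have hrayleigh : x ⬝ᵥ adjMat Z *ᵥ x ≤ specRad Z * (x ⬝ᵥ x) :=
    hZ.dotProduct_mulVec_le_sSup_spectrum_mul x
  by_contra! hle
  have hρ : specRad Z = specRad H :=
    le_antisymm hle (le_of_mul_le_mul_right (by nlinarith) hxx)
  have hsum_eq : (adjMat H *ᵥ x) v - (adjMat H *ᵥ x) u = 0 := by nlinarith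
  have hZx : adjMat Z *ᵥ x = specRad Z • x :=
    hZ.mulVec_eq_sSup_spectrum_smul_of_le (show specRad Z * _ ≤ _ by nlinarith)
  rw [hρ, ← heig, mulVec_adjMat_zykov H hnadj, hsum_eq, zero_smul, add_zero, add_eq_left,
    smul_eq_zero_iff_right hxu.ne', sub_eq_zero] at hZx
  exact hN (neighborSet_eq_of_adjMat_row_eq H hZx).symm

/-- Li–Peng: if `H` is connected with Perron vector `x`, and `u, v` are non-adjacent
vertices with distinct neighborhoods such that `∑_{w ∈ N(v)} x_w ≥ ∑_{w ∈ N(u)} x_w`,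
then the Zykov symmetrization strictly increases the spectral radius. Here
`(adjMat H *ᵥ x) u = ∑_{w ∈ N_H(u)} x_w`. -/
theorem zykov_increases_spectral_radius {V : Type*} [Fintype V] [DecidableEq V]
    (H : SimpleGraph V) (hconn : H.Connected)
    (x : V → ℝ) (hxpos : ∀ w, 0 < x w) (heig : adjMat H *ᵥ x = specRad H • x)
    (u v : V) (huv : u ≠ v) (hnadj : ¬ H.Adj u v)
    (hN : H.neighborSet u ≠ H.neighborSet v)
    (hsum : (adjMat H *ᵥ x) u ≤ (adjMat H *ᵥ x) v) :
    specRad H < specRad (zykov H u v) :=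
  zykov_increases_spectral_radius_general H x hxpos heig u v hnadj hN hsum
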